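/- arXiv:1202.2247 — 9 statements merged into one kernel-verified Lean document; each statement's English description precedes it below -/
import Mathlib

section
/- The matrices A, B, C over GF(5) given by A = !![1,0,0,1,0,1; 0,1,0,1,1,0; 0,0,1,0,1,1], B = !![1,0,0,1,0,1; 0,1,0,1,1,0; 0,0,1,0,1,2], C = !![1,0,0,1,0,1; 0,1,0,1,1,0; 0,0,1,0,1,3] (entries in ZMod 5) all represent the same labeled matroid (the whirl W^3): for every S ⊆ Fin 6, S is independent in A iff S is independent in B iff S is independent in C. -/
/-- Two matrices are geometrically equivalent if one is obtained from the other by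
elementary row operations (an invertible matrix `Q`), column scaling (an invertible
diagonal matrix), and column permutations (a permutation matrix). -/
def GeomEquiv {F : Type*} [Field F] {r n : ℕ}
    (A A' : Matrix (Fin r) (Fin n) F) : Prop :=
  ∃ (Q : Matrix (Fin r) (Fin r) F) (d : Fin n → F) (σ : Equiv.Perm (Fin n)),
    IsUnit Q ∧ (∀ j, d j ≠ 0) ∧
    A' = Q * A * Matrix.diagonal d * σ.permMatrix F

/-- Two matrices are projectively equivalent if one is obtained from the other by
elementary row operations and column scaling. -/
def ProjEquiv {F : Type*} [Field F] {r n : ℕ}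
    (A A' : Matrix (Fin r) (Fin n) F) : Prop :=
  ∃ (Q : Matrix (Fin r) (Fin r) F) (d : Fin n → F),
    IsUnit Q ∧ (∀ j, d j ≠ 0) ∧ A' = Q * A * Matrix.diagonal d

/-- A set `S` of column indices is independent in `A` if the corresponding columns
of `A` are linearly independent. -/
def Indep {F : Type*} [Field F] {r n : ℕ}
    (A : Matrix (Fin r) (Fin n) F) (S : Set (Fin n)) : Prop :=
  LinearIndependent F (fun s : S => A.transpose s.val)

/-- The matrix `[A | x]` obtained from `A` by appending the column `x`. -/
def appendCol {F : Type*} [Field F] {r n : ℕ}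
    (A : Matrix (Fin r) (Fin n) F) (x : Fin r → F) :
    Matrix (Fin r) (Fin (n + 1)) F :=
  Matrix.of fun i => Fin.snoc (A i) (x i)

instance : Fact (Nat.Prime 3) := ⟨by norm_num⟩
instance : Fact (Nat.Prime 5) := ⟨by norm_num⟩

lemma indep_iff {F : Type*} [Field F] {r n : ℕ}
    (M : Matrix (Fin r) (Fin n) F) (S : Set (Fin n)) :
    Indep M S ↔ ∀ g : Fin n → F, (∀ i, g i ≠ 0 → i ∈ S) → M.mulVec g = 0 → g = 0 := by
  classical
  have hsum : ∀ g : Fin n → F, M.mulVec g = ∑ i, g i • M.transpose i := by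
    intro g
    funext j
    simp [Matrix.mulVec, dotProduct, Finset.sum_apply, Matrix.transpose, mul_comm]
  have hsub : ∀ g : Fin n → F, (∀ i, g i ≠ 0 → i ∈ S) →
      ∑ i : S, g i.val • M.transpose i.val = ∑ i, g i • M.transpose i := by
    intro g hsupp
    rw [Finset.sum_set_coe (f := fun i => g i • M.transpose i)]
    apply Finset.sum_subset (Finset.subset_univ _)
    intro i _ hi
    have : g i = 0 := by
      by_contra h
      exact hi (Set.mem_toFinset.mpr (hsupp i h))
    simp [this]
  rw [Indep, Fintype.linearIndependent_iff]
  constructor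
  · intro h g hsupp hMg
    have hg : ∑ i : S, g i.val • M.transpose i.val = 0 := by
      rw [hsub g hsupp, ← hsum g, hMg]
    have := h (fun i => g i.val) hg
    funext i
    by_cases hi : i ∈ S
    · exact this ⟨i, hi⟩
    · by_contra h0
      exact hi (hsupp i h0)
  · intro h g hg i
    set g' : Fin n → F := fun i => if hi : i ∈ S then g ⟨i, hi⟩ else 0 with hg'
    have hsupp : ∀ i, g' i ≠ 0 → i ∈ S := by
      intro i hi
      by_contra hmem
      simp [hg', hmem] at hi
    have hMg : M.mulVec g' = 0 := by
      rw [hsum, ← hsub g' hsupp, ← hg]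
      apply Finset.sum_congr rfl
      intro x _
      simp [hg', x.2]
    have := congrFun (h g' hsupp hMg) i.val
    simpa [hg', i.2] using this

/-- The whirl representation matrix with parameter `t`. -/
def Mt (t : ZMod 5) : Matrix (Fin 3) (Fin 6) (ZMod 5) :=
  !![1,0,0,1,0,1; 0,1,0,1,1,0; 0,0,1,0,1,t]

lemma mulVec_Mt (t : ZMod 5) (g : Fin 6 → ZMod 5) :
    (Mt t).mulVec g = ![g 0 + g 3 + g 5, g 1 + g 3 + g 4, g 2 + g 4 + t * g 5] := by
  have h5a : (![1,0,0,1,0,1] : Fin 6 → ZMod 5) 5 = 1 := rfl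
  have h5b : (![0,1,0,1,1,0] : Fin 6 → ZMod 5) 5 = 0 := rfl
  have h5c : (![0,0,1,0,1,t] : Fin 6 → ZMod 5) 5 = t := rfl
  funext i
  fin_cases i <;>
    simp [Mt, Matrix.mulVec, dotProduct, Fin.sum_univ_six, h5a, h5b, h5c]

/-- Kernel-support transfer core: every nonzero kernel vector of `Mt t` dominates
the support of some nonzero kernel vector of `Mt u`. -/
def core (t u : ZMod 5) : Prop :=
  ∀ d e f : ZMod 5, ¬(d = 0 ∧ e = 0 ∧ f = 0) →
    ∃ d' e' f' : ZMod 5, ¬(d' = 0 ∧ e' = 0 ∧ f' = 0) ∧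
      (-(d' + f') ≠ 0 → -(d + f) ≠ 0) ∧
      (-(d' + e') ≠ 0 → -(d + e) ≠ 0) ∧
      (-(e' + u * f') ≠ 0 → -(e + t * f) ≠ 0) ∧
      (d' ≠ 0 → d ≠ 0) ∧ (e' ≠ 0 → e ≠ 0) ∧ (f' ≠ 0 → f ≠ 0)

set_option synthInstance.maxHeartbeats 1000000 in
set_option synthInstance.maxSize 1024 in
lemma core_12 : core 1 2 := by unfold core; decide
set_option synthInstance.maxHeartbeats 1000000 in
set_option synthInstance.maxSize 1024 in
lemma core_21 : core 2 1 := by unfold core; decide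
set_option synthInstance.maxHeartbeats 1000000 in
set_option synthInstance.maxSize 1024 in
lemma core_23 : core 2 3 := by unfold core; decide
set_option synthInstance.maxHeartbeats 1000000 in
set_option synthInstance.maxSize 1024 in
lemma core_32 : core 3 2 := by unfold core; decide

lemma transfer {t u : ZMod 5} (h : core t u) (g : Fin 6 → ZMod 5)
    (hg : (Mt t).mulVec g = 0) (hg0 : g ≠ 0) :
    ∃ g' : Fin 6 → ZMod 5,
      (Mt u).mulVec g' = 0 ∧ g' ≠ 0 ∧ ∀ i, g' i ≠ 0 → g i ≠ 0 := by
  rw [mulVec_Mt] at hg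
  have e0 : g 0 + g 3 + g 5 = 0 := congrFun hg 0
  have e1 : g 1 + g 3 + g 4 = 0 := congrFun hg 1
  have e2 : g 2 + g 4 + t * g 5 = 0 := congrFun hg 2
  have h0 : g 0 = -(g 3 + g 5) := by linear_combination e0
  have h1 : g 1 = -(g 3 + g 4) := by linear_combination e1
  have h2 : g 2 = -(g 4 + t * g 5) := by linear_combination e2
  have hdef : ¬(g 3 = 0 ∧ g 4 = 0 ∧ g 5 = 0) := by
    rintro ⟨h3, h4, h5⟩
    apply hg0
    funext i
    fin_cases i <;> simp_all
  obtain ⟨d', e', f', hne, k0, k1, k2, k3, k4, k5⟩ := h (g 3) (g 4) (g 5) hdef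
  refine ⟨![-(d' + f'), -(d' + e'), -(e' + u * f'), d', e', f'], ?_, ?_, ?_⟩
  · rw [mulVec_Mt]
    funext i
    fin_cases i
    · show -(d' + f') + d' + f' = 0; ring
    · show -(d' + e') + d' + e' = 0; ring
    · show -(e' + u * f') + e' + u * f' = 0; ring
  · intro hz
    exact hne ⟨congrFun hz 3, congrFun hz 4, congrFun hz 5⟩
  · intro i
    fin_cases i
    · show -(d' + f') ≠ 0 → g 0 ≠ 0
      rw [h0]; exact k0
    · show -(d' + e') ≠ 0 → g 1 ≠ 0
      rw [h1]; exact k1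
    · show -(e' + u * f') ≠ 0 → g 2 ≠ 0
      rw [h2]; exact k2
    · show d' ≠ 0 → g 3 ≠ 0
      exact k3
    · show e' ≠ 0 → g 4 ≠ 0
      exact k4
    · show f' ≠ 0 → g 5 ≠ 0
      exact k5

lemma indep_mono {t u : ZMod 5} (h : core u t) (S : Set (Fin 6)) :
    Indep (Mt t) S → Indep (Mt u) S := by
  rw [indep_iff, indep_iff]
  intro hI g hsupp hMg
  by_contra hg0
  obtain ⟨g', hg'1, hg'2, hg'3⟩ := transfer h g hMg hg0
  exact hg'2 (hI g' (fun i hi => hsupp i (hg'3 i hi)) hg'1)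

/-- The three matrices `A`, `B`, `C` over `GF(5)` represent the same labeled matroid,
the whirl `W^3`. -/
theorem whirl_same_matroid :
    let A : Matrix (Fin 3) (Fin 6) (ZMod 5) :=
      !![1,0,0,1,0,1; 0,1,0,1,1,0; 0,0,1,0,1,1]
    let B : Matrix (Fin 3) (Fin 6) (ZMod 5) :=
      !![1,0,0,1,0,1; 0,1,0,1,1,0; 0,0,1,0,1,2]
    let C : Matrix (Fin 3) (Fin 6) (ZMod 5) :=
      !![1,0,0,1,0,1; 0,1,0,1,1,0; 0,0,1,0,1,3]
    ∀ S : Set (Fin 6), (Indep A S ↔ Indep B S) ∧ (Indep B S ↔ Indep C S) := by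
  intro A B C S
  have hA : A = Mt 1 := rfl
  have hB : B = Mt 2 := rfl
  have hC : C = Mt 3 := rfl
  rw [hA, hB, hC]
  exact ⟨⟨indep_mono core_21 S, indep_mono core_12 S⟩,
    ⟨indep_mono core_32 S, indep_mono core_23 S⟩⟩
end

section
/- The matrices A = !![1,0,0,1,0,1; 0,1,0,1,1,0; 0,0,1,0,1,1], B = !![1,0,0,1,0,1; 0,1,0,1,1,0; 0,0,1,0,1,2], and C = !![1,0,0,1,0,1; 0,1,0,1,1,0; 0,0,1,0,1,3] over ZMod 5 are pairwise projectively inequivalent: no two of them are related by A' = Q * A * D with Q invertible and D invertible diagonal. -/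
def Mx (c : ZMod 5) : Matrix (Fin 3) (Fin 6) (ZMod 5) :=
  !![1,0,0,1,0,1; 0,1,0,1,1,0; 0,0,1,0,1,c]

lemma key {a b : ZMod 5} (h : a ≠ b) : ¬ ProjEquiv (Mx a) (Mx b) := by
  rintro ⟨Q, d, -, hd, hEq⟩
  have e := fun i j => congrFun (congrFun hEq i) j
  have e00 := e 0 0; have e10 := e 1 0; have e20 := e 2 0
  have e01 := e 0 1; have e21 := e 2 1
  have e02 := e 0 2; have e12 := e 1 2
  have e03 := e 0 3; have e13 := e 1 3
  have e14 := e 1 4; have e24 := e 2 4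
  have e05 := e 0 5; have e25 := e 2 5
  have c1 : ![(1:ZMod 5),0,0,1,0,1] 5 = 1 := rfl
  have c2 : ![(0:ZMod 5),1,0,1,1,0] 5 = 0 := rfl
  have c3 : ![(0:ZMod 5),0,1,0,1,a] 5 = a := rfl
  have c4 : ![(0:ZMod 5),0,1,0,1,b] 5 = b := rfl
  simp [Mx, Matrix.mul_apply, Matrix.diagonal, Fin.sum_univ_succ, c1, c2, c3, c4,
    Matrix.vecHead, Matrix.vecTail] at e00 e10 e20 e01 e21 e02 e12 e03 e13 e14 e24 e05 e25
  -- off-diagonal entries of Q vanish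
  have h10 : Q 1 0 = 0 := e10.resolve_right (hd 0)
  have h20 : Q 2 0 = 0 := e20.resolve_right (hd 0)
  have h01 : Q 0 1 = 0 := e01.resolve_right (hd 1)
  have h21 : Q 2 1 = 0 := e21.resolve_right (hd 1)
  have h02 : Q 0 2 = 0 := e02.resolve_right (hd 2)
  have h12 : Q 1 2 = 0 := e12.resolve_right (hd 2)
  rw [h01] at e03; rw [h10] at e13
  have hA : Q 0 0 = Q 1 1 := by
    apply mul_right_cancel₀ (hd 3)
    simp at e03 e13; rw [← e03, ← e13]
  rw [h12] at e14; rw [h21] at e24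
  have hB : Q 1 1 = Q 2 2 := by
    apply mul_right_cancel₀ (hd 4)
    simp at e14 e24; rw [← e14, ← e24]
  rw [h02] at e05; rw [h20] at e25
  simp at e05 e25
  apply h
  have : Q 0 0 * d 5 = 1 := e05.symm
  rw [hA, hB] at this
  calc a = a * (Q 2 2 * d 5) := by rw [this, mul_one]
    _ = b := by rw [e25]; ring

/-- The three representations of the whirl `W^3` over `GF(5)` are pairwise
projectively inequivalent. -/
theorem whirl_proj_inequivalent :
    let A : Matrix (Fin 3) (Fin 6) (ZMod 5) :=
      !![1,0,0,1,0,1; 0,1,0,1,1,0; 0,0,1,0,1,1]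
    let B : Matrix (Fin 3) (Fin 6) (ZMod 5) :=
      !![1,0,0,1,0,1; 0,1,0,1,1,0; 0,0,1,0,1,2]
    let C : Matrix (Fin 3) (Fin 6) (ZMod 5) :=
      !![1,0,0,1,0,1; 0,1,0,1,1,0; 0,0,1,0,1,3]
    ¬ ProjEquiv A B ∧ ¬ ProjEquiv B A ∧ ¬ ProjEquiv A C ∧ ¬ ProjEquiv C A ∧
      ¬ ProjEquiv B C ∧ ¬ ProjEquiv C B := by
  exact ⟨key (by decide), key (by decide), key (by decide), key (by decide),
    key (by decide), key (by decide)⟩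
end

section
/- The matrices B = !![1,0,0,1,0,1; 0,1,0,1,1,0; 0,0,1,0,1,2] and C = !![1,0,0,1,0,1; 0,1,0,1,1,0; 0,0,1,0,1,3] over ZMod 5 are geometrically equivalent. -/
/-- The representations `B` and `C` of the whirl `W^3` over `GF(5)` are
geometrically equivalent. -/
theorem whirl_B_C_geomEquiv :
    let B : Matrix (Fin 3) (Fin 6) (ZMod 5) :=
      !![1,0,0,1,0,1; 0,1,0,1,1,0; 0,0,1,0,1,2]
    let C : Matrix (Fin 3) (Fin 6) (ZMod 5) :=
      !![1,0,0,1,0,1; 0,1,0,1,1,0; 0,0,1,0,1,3]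
    GeomEquiv B C := by
  intro B C
  refine ⟨!![1,0,0; 0,0,3; 0,3,0], ![1,2,2,1,2,1], Equiv.swap 1 2 * Equiv.swap 3 5,
    ?_, by decide, ?_⟩
  · rw [Matrix.isUnit_iff_isUnit_det]
    decide
  · decide
end

section
/- The matrices A = !![1,0,0,1,0,1; 0,1,0,1,1,0; 0,0,1,0,1,1] and B = !![1,0,0,1,0,1; 0,1,0,1,1,0; 0,0,1,0,1,2] over ZMod 5 are NOT geometrically equivalent: there exist no invertible Q : Matrix (Fin 3) (Fin 3) (ZMod 5), invertible diagonal D : Matrix (Fin 6) (Fin 6) (ZMod 5), and permutation σ of Fin 6 with B = Q * A * D * P, where P is the permutation matrix of σ. -/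
def whirlACol : Fin 6 → Fin 3 → ZMod 5 :=
  ![![1,0,0],![0,1,0],![0,0,1],![1,1,0],![0,1,1],![1,0,1]]

set_option maxHeartbeats 4000000 in
set_option maxRecDepth 40000 in
set_option synthInstance.maxHeartbeats 1000000 in
set_option synthInstance.maxSize 2000 in
theorem whirl_key : ¬ ∃ (t0 t1 t3 : Fin 6) (c1 c3 : ZMod 5),
    (t0 ≠ t1 ∧ t0 ≠ t3 ∧ t1 ≠ t3 ∧ c1 ≠ 0 ∧ c3 ≠ 0 ∧
      ∀ i, c3 * whirlACol t3 i = whirlACol t0 i + c1 * whirlACol t1 i) ∧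
    ∃ (t2 t4 : Fin 6) (c2 c4 : ZMod 5),
      (t1 ≠ t2 ∧ t1 ≠ t4 ∧ t2 ≠ t4 ∧ c2 ≠ 0 ∧ c4 ≠ 0 ∧
        ∀ i, c4 * whirlACol t4 i = c1 * whirlACol t1 i + c2 * whirlACol t2 i) ∧
      ∃ (t5 : Fin 6) (c5 : ZMod 5),
        t0 ≠ t2 ∧ t0 ≠ t5 ∧ t2 ≠ t5 ∧ c5 ≠ 0 ∧
        ∀ i, c5 * whirlACol t5 i = whirlACol t0 i + 2 * c2 * whirlACol t2 i := by
  decide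

/-- The representations `A` and `B` of the whirl `W^3` over `GF(5)` are NOT
geometrically equivalent. -/
theorem whirl_A_B_not_geomEquiv :
    let A : Matrix (Fin 3) (Fin 6) (ZMod 5) :=
      !![1,0,0,1,0,1; 0,1,0,1,1,0; 0,0,1,0,1,1]
    let B : Matrix (Fin 3) (Fin 6) (ZMod 5) :=
      !![1,0,0,1,0,1; 0,1,0,1,1,0; 0,0,1,0,1,2]
    ¬ GeomEquiv A B := by
  intro A B h
  obtain ⟨Q, d, σ, hQ, hd, hB⟩ := h
  obtain ⟨u, rfl⟩ := hQ
  set τ := σ.symm with hτ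
  have haA : ∀ (k : Fin 6) (i : Fin 3), whirlACol k i = A i k := by
    intro k i; fin_cases k <;> fin_cases i <;> rfl
  have hcol : ((↑u⁻¹ : Matrix (Fin 3) (Fin 3) (ZMod 5)) * B)
      = A * Matrix.diagonal d * σ.permMatrix (ZMod 5) := by
    rw [hB, ← Matrix.mul_assoc, ← Matrix.mul_assoc, ← Matrix.mul_assoc,
      Units.inv_mul, Matrix.one_mul]
  have hentry : ∀ (i : Fin 3) (j : Fin 6),
      ((↑u⁻¹ : Matrix (Fin 3) (Fin 3) (ZMod 5)) * B) i j = A i (τ j) * d (τ j) := by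
    intro i j
    rw [hcol, Equiv.Perm.permMatrix, PEquiv.mul_toMatrix_toPEquiv,
      Matrix.submatrix_apply, Matrix.mul_diagonal]
    rfl
  have hB3 : ∀ k : Fin 3, B k 3 = B k 0 + B k 1 := by intro k; fin_cases k <;> rfl
  have hB4 : ∀ k : Fin 3, B k 4 = B k 1 + B k 2 := by intro k; fin_cases k <;> rfl
  have hB5 : ∀ k : Fin 3, B k 5 = B k 0 + 2 * B k 2 := by intro k; fin_cases k <;> rfl
  have hrel : ∀ (i : Fin 3) (j j' j'' : Fin 6) (cc : ZMod 5),
      (∀ k : Fin 3, B k j = B k j' + cc * B k j'') →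
      ((↑u⁻¹ : Matrix (Fin 3) (Fin 3) (ZMod 5)) * B) i j
        = ((↑u⁻¹ : Matrix (Fin 3) (Fin 3) (ZMod 5)) * B) i j'
          + cc * ((↑u⁻¹ : Matrix (Fin 3) (Fin 3) (ZMod 5)) * B) i j'' := by
    intro i j j' j'' cc hc
    simp only [Matrix.mul_apply, Finset.mul_sum, ← Finset.sum_add_distrib]
    apply Finset.sum_congr rfl
    intro k _
    rw [hc k]; ring
  have e0 : d (τ 0) ≠ 0 := hd _
  have step : ∀ (j j' j'' : Fin 6) (cc : ZMod 5),
      (∀ k : Fin 3, B k j = B k j' + cc * B k j'') → ∀ i : Fin 3,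
      A i (τ j) * d (τ j) = A i (τ j') * d (τ j') + cc * (A i (τ j'') * d (τ j'')) := by
    intro j j' j'' cc hc i
    rw [← hentry i j, ← hentry i j', ← hentry i j'', hrel i j j' j'' cc hc]
  have hne : ∀ a b : Fin 6, a ≠ b → τ a ≠ τ b := fun a b hab h => hab (τ.injective h)
  refine whirl_key ⟨τ 0, τ 1, τ 3, d (τ 1) * (d (τ 0))⁻¹, d (τ 3) * (d (τ 0))⁻¹,
    ⟨hne 0 1 (by decide), hne 0 3 (by decide), hne 1 3 (by decide),
      mul_ne_zero (hd _) (inv_ne_zero e0), mul_ne_zero (hd _) (inv_ne_zero e0), ?_⟩,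
    τ 2, τ 4, d (τ 2) * (d (τ 0))⁻¹, d (τ 4) * (d (τ 0))⁻¹,
    ⟨hne 1 2 (by decide), hne 1 4 (by decide), hne 2 4 (by decide),
      mul_ne_zero (hd _) (inv_ne_zero e0), mul_ne_zero (hd _) (inv_ne_zero e0), ?_⟩,
    τ 5, d (τ 5) * (d (τ 0))⁻¹,
    hne 0 2 (by decide), hne 0 5 (by decide), hne 2 5 (by decide),
    mul_ne_zero (hd _) (inv_ne_zero e0), ?_⟩
  · intro i
    have h := step 3 0 1 1 (by intro k; rw [hB3 k, one_mul]) i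
    rw [haA, haA, haA]
    field_simp
    linear_combination h
  · intro i
    have h := step 4 1 2 1 (by intro k; rw [hB4 k, one_mul]) i
    rw [haA, haA, haA]
    field_simp
    linear_combination h
  · intro i
    have h := step 5 0 2 2 (by intro k; rw [hB5 k]) i
    rw [haA, haA, haA]
    field_simp
    linear_combination h
end

section
/- Over ZMod 5, the matrices [A | (1,1,1)ᵀ] = !![1,0,0,1,0,1,1; 0,1,0,1,1,0,1; 0,0,1,0,1,1,1] and [B | (1,1,1)ᵀ] = !![1,0,0,1,0,1,1; 0,1,0,1,1,0,1; 0,0,1,0,1,2,1] do NOT have isomorphic column matroids: there is no bijection σ : Fin 7 ≃ Fin 7 such that for every S ⊆ Fin 7, S is independent in the first matrix iff σ '' S is independent in the second. (The first represents the non-Fano matroid F₇⁻ and the second represents X₇.) -/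
/-!
The columns of an `r`-row matrix listed by an injective `f : Fin r → Fin n` are independent
exactly when the square submatrix they form is nonsingular. A column matroid
isomorphism `σ` therefore turns the ordered dependent `r`-tuples of one matrix bijectively
into those of the other, via `f ↦ σ ∘ f`. The non-Fano matroid `F₇⁻` has six three-point
lines and `X₇` only five, giving `36 ≠ 30` ordered dependent triples.
-/

open Finset

variable {F : Type*} [Field F] {r n : ℕ}

theorem indep_range_iff_det_ne_zero (A : Matrix (Fin r) (Fin n) F) {f : Fin r → Fin n}
    (hf : Function.Injective f) :
    Indep A (Set.range f) ↔ (A.submatrix id f).det ≠ 0 := by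
  rw [Indep, ← linearIndependent_equiv (Equiv.ofInjective f hf),
    ← isUnit_iff_ne_zero, ← Matrix.isUnit_iff_isUnit_det,
    ← Matrix.linearIndependent_cols_iff_isUnit]
  rfl

def dependentTuples [DecidableEq F] (A : Matrix (Fin r) (Fin n) F) : Finset (Fin r → Fin n) :=
  univ.filter fun f => Function.Injective f ∧ (A.submatrix id f).det = 0

theorem mem_dependentTuples [DecidableEq F] {A : Matrix (Fin r) (Fin n) F} {f : Fin r → Fin n} :
    f ∈ dependentTuples A ↔ Function.Injective f ∧ ¬ Indep A (Set.range f) := by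
  simp only [dependentTuples, mem_filter, mem_univ, true_and]
  exact and_congr_right fun hf => by rw [indep_range_iff_det_ne_zero A hf, not_not]

theorem card_dependentTuples_eq_of_indep_iff [DecidableEq F] {A B : Matrix (Fin r) (Fin n) F}
    (σ : Fin n ≃ Fin n) (hσ : ∀ S, Indep A S ↔ Indep B (σ '' S)) :
    #(dependentTuples A) = #(dependentTuples B) := by
  have mem_iff (f : Fin r → Fin n) : σ ∘ f ∈ dependentTuples B ↔ f ∈ dependentTuples A := by
    rw [mem_dependentTuples, mem_dependentTuples, Set.range_comp, ← hσ,
      σ.injective.of_comp_iff]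
  refine card_nbij' (σ ∘ ·) (σ.symm ∘ ·) (fun f hf => (mem_iff f).2 hf)
    (fun g hg => (mem_iff _).1 ?_) (fun f _ => by ext; simp) (fun g _ => by ext; simp)
  rwa [← Function.comp_assoc, σ.self_comp_symm, Function.id_comp]

/-- `[A | (1,1,1)ᵀ]` (representing `F₇⁻`) and `[B | (1,1,1)ᵀ]` (representing `X₇`)
do not have isomorphic column matroids. -/
theorem nonFano_X7_not_isomorphic :
    let M₁ : Matrix (Fin 3) (Fin 7) (ZMod 5) :=
      !![1,0,0,1,0,1,1; 0,1,0,1,1,0,1; 0,0,1,0,1,1,1]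
    let M₂ : Matrix (Fin 3) (Fin 7) (ZMod 5) :=
      !![1,0,0,1,0,1,1; 0,1,0,1,1,0,1; 0,0,1,0,1,2,1]
    ¬ ∃ σ : Fin 7 ≃ Fin 7, ∀ S : Set (Fin 7), Indep M₁ S ↔ Indep M₂ (σ '' S) := by
  intro M₁ M₂ ⟨σ, hσ⟩
  have h₁ : #(dependentTuples M₁) = 36 := by decide
  have h₂ : #(dependentTuples M₂) = 30 := by decide
  have := card_dependentTuples_eq_of_indep_iff σ hσ
  omega
end

section
/- Over ZMod 5, the matrices [B | (1,1,1)ᵀ] = !![1,0,0,1,0,1,1; 0,1,0,1,1,0,1; 0,0,1,0,1,2,1] and [C | (1,1,1)ᵀ] = !![1,0,0,1,0,1,1; 0,1,0,1,1,0,1; 0,0,1,0,1,3,1] have isomorphic column matroids: there exists a bijection σ : Fin 7 ≃ Fin 7 such that for every S ⊆ Fin 7, S is independent in the first matrix iff σ '' S is independent in the second. (Both represent the matroid X₇.) -/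
section X7aux

/-- row reversal as a linear equivalence on `Fin 3 → ZMod 5` -/
noncomputable def X7e : (Fin 3 → ZMod 5) ≃ₗ[ZMod 5] (Fin 3 → ZMod 5) :=
  LinearEquiv.funCongrLeft (ZMod 5) (ZMod 5) (Equiv.swap 0 2)

def X7d : Fin 7 → (ZMod 5)ˣ :=
  ![1, 1, 1, 1, 1, ⟨3, 2, by decide, by decide⟩, 1]

def X7σ : Equiv.Perm (Fin 7) := Equiv.swap 0 2 * Equiv.swap 3 4

theorem X7indep_iff {v w : (Fin 7) → (Fin 3 → ZMod 5)}
    (h : ∀ j, w (X7σ j) = (X7d j : ZMod 5) • X7e (v j)) (S : Set (Fin 7)) :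
    LinearIndependent (ZMod 5) (fun s : S => v s.val) ↔
    LinearIndependent (ZMod 5) (fun s : (X7σ '' S : Set (Fin 7)) => w s.val) := by
  rw [← linearIndependent_equiv' (Equiv.Set.image X7σ S X7σ.injective)
    (g := fun s : S => w (X7σ s.val)) (by funext s; rfl)]
  have hfun : (fun s : S => w (X7σ s.val)) =
      (fun s : S => (X7d s.val) • ((X7e : (Fin 3 → ZMod 5) →ₗ[ZMod 5] (Fin 3 → ZMod 5)) ∘
        fun t : S => v t.val) s) := by
    funext s; exact h s.val
  rw [hfun]
  constructor
  · intro hv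
    exact (((X7e : (Fin 3 → ZMod 5) →ₗ[ZMod 5] (Fin 3 → ZMod 5)).linearIndependent_iff
      (LinearEquiv.ker X7e)).2 hv).units_smul _
  · intro hw
    have := hw.units_smul (fun s : S => (X7d s.val)⁻¹)
    have this' : LinearIndependent (ZMod 5)
        (fun s : S => (X7d s.val)⁻¹ • ((X7d s.val : ZMod 5) • X7e (v s.val))) := this
    have h2 : (fun s : S => (X7d s.val)⁻¹ • ((X7d s.val : ZMod 5) • X7e (v s.val))) =
        ((X7e : (Fin 3 → ZMod 5) →ₗ[ZMod 5] (Fin 3 → ZMod 5)) ∘ fun s : S => v s.val) := by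
      funext s
      rw [← Units.smul_def, inv_smul_smul]; rfl
    rw [h2] at this'
    exact ((X7e : (Fin 3 → ZMod 5) →ₗ[ZMod 5] (Fin 3 → ZMod 5)).linearIndependent_iff
      (LinearEquiv.ker X7e)).1 this'

end X7aux

/-- `[B | (1,1,1)ᵀ]` and `[C | (1,1,1)ᵀ]` have isomorphic column matroids
(both represent `X₇`). -/
theorem X7_isomorphic :
    let M₁ : Matrix (Fin 3) (Fin 7) (ZMod 5) :=
      !![1,0,0,1,0,1,1; 0,1,0,1,1,0,1; 0,0,1,0,1,2,1]
    let M₂ : Matrix (Fin 3) (Fin 7) (ZMod 5) :=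
      !![1,0,0,1,0,1,1; 0,1,0,1,1,0,1; 0,0,1,0,1,3,1]
    ∃ σ : Fin 7 ≃ Fin 7, ∀ S : Set (Fin 7), Indep M₁ S ↔ Indep M₂ (σ '' S) := by
  intro M₁ M₂
  refine ⟨X7σ, fun S => ?_⟩
  exact X7indep_iff (v := fun j => M₁.transpose j) (w := fun j => M₂.transpose j)
    (by decide) S
end

section
/- The matrices B₁ = !![1,0,0,1,0,1; 0,1,0,1,1,3; 0,0,1,0,1,1] and B₄ = !![1,0,0,1,0,1; 0,1,0,1,1,2; 0,0,1,0,1,4] over ZMod 5 (both representing the matroid Q₆) are geometrically equivalent. -/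
/-- The representations `B₁` and `B₄` of `Q₆` over `GF(5)` are geometrically
equivalent. -/
theorem Q6_B1_B4_geomEquiv :
    let B₁ : Matrix (Fin 3) (Fin 6) (ZMod 5) :=
      !![1,0,0,1,0,1; 0,1,0,1,1,3; 0,0,1,0,1,1]
    let B₄ : Matrix (Fin 3) (Fin 6) (ZMod 5) :=
      !![1,0,0,1,0,1; 0,1,0,1,1,2; 0,0,1,0,1,4]
    GeomEquiv B₁ B₄ := by
  intro B₁ B₄
  refine ⟨!![1,0,0; 0,1,4; 0,0,4], ![1,1,4,1,4,1], Equiv.swap 2 4, ?_, ?_, ?_⟩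
  · rw [Matrix.isUnit_iff_isUnit_det]
    simp only [Matrix.det_fin_three]
    decide
  · decide
  · ext i j
    fin_cases i <;> fin_cases j <;>
      simp [Matrix.mul_apply, Fin.sum_univ_succ, Equiv.Perm.permMatrix,
        Matrix.diagonal, PEquiv.toMatrix, Equiv.toPEquiv, Equiv.swap_apply_def] <;>
      decide
end

section
/- The matroid Q₆ is not representable over GF(3): there is no matrix M : Matrix (Fin 3) (Fin 6) (ZMod 3) whose column matroid is isomorphic to the column matroid of B₁ = !![1,0,0,1,0,1; 0,1,0,1,1,3; 0,0,1,0,1,1] over ZMod 5; that is, there are no such M and bijection σ : Fin 6 ≃ Fin 6 with: for every S ⊆ Fin 6, S is independent in M (over ZMod 3) iff σ '' S is independent in B₁ (over ZMod 5). -/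
/-!
Relabel the columns of a putative representation over GF(3) by `σ` and apply row operations so
that the columns of the basis `{0, 1, 2}` of `Q₆` become the unit vectors; neither step changes
which `3 × 3` minors vanish. The dependent triples `{0, 1, 3}` and `{1, 2, 4}` then kill one
coordinate of columns `3` and `4`, and the independent triples through two unit vectors make all
other coordinates of columns `3`, `4`, `5` nonzero. Two distinct nonzero elements of GF(3) add up
to zero, so the nonvanishing minors on `{2, 3, 5}` and `{0, 4, 5}` become two linear relations,
and these force the minor on `{3, 4, 5}` to vanish, although `{3, 4, 5}` is a basis of `Q₆`.
-/

open Matrix Function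

section
variable {F : Type*} [Field F] {r n : ℕ}

theorem indep_range_iff_det_submatrix_ne_zero (A : Matrix (Fin r) (Fin n) F) {f : Fin r → Fin n}
    (hf : Injective f) : Indep A (Set.range f) ↔ (A.submatrix id f).det ≠ 0 := by
  rw [Indep, ← linearIndependent_equiv (Equiv.ofInjective f hf), ← isUnit_iff_ne_zero,
    ← isUnit_iff_isUnit_det, ← linearIndependent_cols_iff_isUnit]
  rfl

theorem det_submatrix_ne_zero_iff_of_indep_iff {K : Type*} [Field K]
    {A : Matrix (Fin r) (Fin n) F} {B : Matrix (Fin r) (Fin n) K} {σ : Fin n ≃ Fin n}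
    (h : ∀ S, Indep A S ↔ Indep B (σ '' S)) {f : Fin r → Fin n} (hf : Injective f) :
    (A.submatrix id (σ.symm ∘ f)).det ≠ 0 ↔ (B.submatrix id f).det ≠ 0 := by
  rw [← indep_range_iff_det_submatrix_ne_zero A (σ.symm.injective.comp hf),
    ← indep_range_iff_det_submatrix_ne_zero B hf, h, ← Set.range_comp, ← comp_assoc,
    Equiv.self_comp_symm, id_comp]

theorem det_mul_submatrix_ne_zero_iff {Q : Matrix (Fin r) (Fin r) F} (hQ : IsUnit Q.det)
    (A : Matrix (Fin r) (Fin n) F) (f : Fin r → Fin n) :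
    ((Q * A).submatrix id f).det ≠ 0 ↔ (A.submatrix id f).det ≠ 0 := by
  rw [show (Q * A).submatrix id f = Q * A.submatrix id f from rfl, det_mul,
    mul_ne_zero_iff, and_iff_right hQ.ne_zero]

theorem exists_isUnit_det_mul_submatrix_eq_one {A : Matrix (Fin r) (Fin n) F}
    {f : Fin r → Fin n} (hf : (A.submatrix id f).det ≠ 0) :
    ∃ Q : Matrix (Fin r) (Fin r) F, IsUnit Q.det ∧ (Q * A).submatrix id f = 1 :=
  ⟨(A.submatrix id f)⁻¹, isUnit_nonsing_inv_det _ hf.isUnit,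
    nonsing_inv_mul _ hf.isUnit⟩

end

theorem ZMod.three_add_eq_zero_of_ne {u v : ZMod 3} (hu : u ≠ 0) (hv : v ≠ 0) (huv : u ≠ v) :
    u + v = 0 := by
  revert u v
  decide

def Q6Matrix : Matrix (Fin 3) (Fin 6) (ZMod 5) := !![1,0,0,1,0,1; 0,1,0,1,1,3; 0,0,1,0,1,1]

theorem not_forall_det_submatrix_ne_zero_iff_Q6Matrix (N : Matrix (Fin 3) (Fin 6) (ZMod 3))
    (hN : N.submatrix id ![0, 1, 2] = 1) :
    ¬ ∀ f, Injective f → ((N.submatrix id f).det ≠ 0 ↔ (Q6Matrix.submatrix id f).det ≠ 0) := by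
  intro h
  simp only [← Matrix.ext_iff, Fin.forall_fin_succ, IsEmpty.forall_iff, and_true, submatrix_apply,
    id_eq, one_apply, cons_val_zero, cons_val_succ, cons_val_fin_one, Fin.succ_zero_eq_one,
    Fin.succ_one_eq_two, Fin.succ_ne_zero, Fin.reduceEq, ↓reduceIte] at hN
  simp only [det_fin_three, submatrix_apply, id, Q6Matrix] at h
  have ha2 : N 2 3 = 0 := by simpa +decide [hN] using h ![0, 1, 3] (by decide)
  have hb0 : N 0 4 = 0 := by simpa +decide [hN] using h ![1, 2, 4] (by decide)
  have ha0 : N 0 3 ≠ 0 := by simpa +decide [hN] using h ![1, 2, 3] (by decide)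
  have ha1 : N 1 3 ≠ 0 := by simpa +decide [hN] using h ![0, 2, 3] (by decide)
  have hb1 : N 1 4 ≠ 0 := by simpa +decide [hN] using h ![0, 2, 4] (by decide)
  have hb2 : N 2 4 ≠ 0 := by simpa +decide [hN] using h ![0, 1, 4] (by decide)
  have hc0 : N 0 5 ≠ 0 := by simpa +decide [hN] using h ![1, 2, 5] (by decide)
  have hc1 : N 1 5 ≠ 0 := by simpa +decide [hN] using h ![0, 2, 5] (by decide)
  have hc2 : N 2 5 ≠ 0 := by simpa +decide [hN] using h ![0, 1, 5] (by decide)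
  have hac : N 0 3 * N 1 5 + N 0 5 * N 1 3 = 0 :=
    ZMod.three_add_eq_zero_of_ne (mul_ne_zero ha0 hc1) (mul_ne_zero hc0 ha1)
      (sub_ne_zero.1 (by simpa +decide [hN] using h ![2, 3, 5] (by decide)))
  have hbc : N 1 4 * N 2 5 + N 1 5 * N 2 4 = 0 :=
    ZMod.three_add_eq_zero_of_ne (mul_ne_zero hb1 hc2) (mul_ne_zero hc1 hb2)
      (sub_ne_zero.1 (by simpa +decide [hN] using h ![0, 4, 5] (by decide)))
  have h345 : N 0 3 * N 1 4 * N 2 5 - N 0 3 * N 1 5 * N 2 4 + N 0 5 * N 1 3 * N 2 4 ≠ 0 := by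
    simpa +decide [ha2, hb0] using h ![3, 4, 5] (by decide)
  have h3 : (3 : ZMod 3) = 0 := rfl
  exact h345 (by linear_combination N 0 3 * hbc + N 2 4 * hac - N 0 3 * N 1 5 * N 2 4 * h3)

/-- The matroid `Q₆` is not representable over `GF(3)`. -/
theorem Q6_not_representable_GF3 :
    let B₁ : Matrix (Fin 3) (Fin 6) (ZMod 5) :=
      !![1,0,0,1,0,1; 0,1,0,1,1,3; 0,0,1,0,1,1]
    ¬ ∃ (M : Matrix (Fin 3) (Fin 6) (ZMod 3)) (σ : Fin 6 ≃ Fin 6),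
        ∀ S : Set (Fin 6), Indep M S ↔ Indep B₁ (σ '' S) := by
  rintro B₁ ⟨M, σ, hM⟩
  have hminor (f : Fin 3 → Fin 6) (hf : Injective f) :
      ((M.submatrix id σ.symm).submatrix id f).det ≠ 0 ↔ (B₁.submatrix id f).det ≠ 0 :=
    det_submatrix_ne_zero_iff_of_indep_iff hM hf
  obtain ⟨Q, hQ, hQN⟩ := exists_isUnit_det_mul_submatrix_eq_one
    ((hminor ![0, 1, 2] (by decide)).2 (by decide))
  exact not_forall_det_submatrix_ne_zero_iff_Q6Matrix _ hQN fun f hf =>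
    (det_mul_submatrix_ne_zero_iff hQ _ f).trans (hminor f hf)
end

section
/- Let NF = !![1,0,0,1,0,1,1; 0,1,0,1,1,0,1; 0,0,1,0,1,1,1] over ZMod 5 (a representation of the non-Fano matroid F₇⁻). The 3 × 8 matrices [NF | (1,1,3)ᵀ] and [NF | (1,1,4)ᵀ] obtained by appending the columns (1,1,3)ᵀ and (1,1,4)ᵀ respectively are geometrically equivalent over ZMod 5, and they are equal as labeled matroids: for every S ⊆ Fin 8, S is independent in [NF | (1,1,3)ᵀ] iff S is independent in [NF | (1,1,4)ᵀ]. -/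
open Module Submodule Set

section Bases

variable {F V ι : Type*} [Field F] [AddCommGroup V] [Module F V] [FiniteDimensional F V]
  {m : ℕ}

theorem LinearIndepOn.exists_fin_finrank_extension {v : ι → V} (hv : span F (range v) = ⊤)
    (hm : finrank F V = m) {S : Set ι} (hS : LinearIndepOn F v S) :
    ∃ f : Fin m → ι, S ⊆ range f ∧ LinearIndependent F (v ∘ f) := by
  obtain ⟨b, -, hSb, hspan, hb⟩ := exists_linearIndepOn_extension hS (subset_univ S)
  have hb_top : span F (range fun x : b => v x) = ⊤ := by
    rw [eq_top_iff, ← hv, span_le, ← image_univ]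
    simpa [← image_eq_range] using hspan
  let B := Basis.mk hb hb_top.ge
  have : Fintype b := @Fintype.ofFinite b (Module.Finite.finite_basis B)
  let e : Fin m ≃ b := (Fintype.equivFinOfCardEq (hm ▸ (finrank_eq_card_basis B).symm)).symm
  refine ⟨Subtype.val ∘ e, ?_, (linearIndependent_equiv e).mpr hb⟩
  rw [range_comp, e.range_eq_univ, image_univ, Subtype.range_coe]
  exact hSb

theorem LinearIndepOn.of_forall_linearIndependent_comp {v w : ι → V} (hv : span F (range v) = ⊤)
    (hm : finrank F V = m)
    (hbases : ∀ f : Fin m → ι, LinearIndependent F (v ∘ f) → LinearIndependent F (w ∘ f))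
    {S : Set ι} (hS : LinearIndepOn F v S) : LinearIndepOn F w S := by
  obtain ⟨f, hSf, hf⟩ := hS.exists_fin_finrank_extension hv hm
  exact ((linearIndepOn_range_iff hf.injective.of_comp w).mpr (hbases f hf)).mono hSf

theorem span_range_eq_top_of_linearIndependent_comp {v : ι → V} (hm : finrank F V = m)
    {f : Fin m → ι} (hf : LinearIndependent F (v ∘ f)) : span F (range v) = ⊤ :=
  eq_top_mono (span_mono (range_comp_subset_range f v))
    (hf.span_eq_top_of_card_eq_finrank' (by rw [Fintype.card_fin, hm]))

theorem linearIndepOn_iff_of_linearIndependent_comp_iff {v w : ι → V} (hm : finrank F V = m)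
    {f₀ : Fin m → ι} (hf₀ : LinearIndependent F (v ∘ f₀))
    (hbases : ∀ f : Fin m → ι, LinearIndependent F (v ∘ f) ↔ LinearIndependent F (w ∘ f))
    (S : Set ι) : LinearIndepOn F v S ↔ LinearIndepOn F w S :=
  ⟨.of_forall_linearIndependent_comp (span_range_eq_top_of_linearIndependent_comp hm hf₀) hm
      fun f => (hbases f).mp,
    .of_forall_linearIndependent_comp
      (span_range_eq_top_of_linearIndependent_comp hm ((hbases f₀).mp hf₀)) hm
      fun f => (hbases f).mpr⟩

end Bases

section Matrix

variable {F : Type*} [Field F] {r n : ℕ}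

theorem linearIndependent_transpose_comp_iff_det_ne_zero (A : Matrix (Fin r) (Fin n) F)
    (f : Fin r → Fin n) :
    LinearIndependent F (A.transpose ∘ f) ↔ (A.submatrix id f).det ≠ 0 := by
  rw [← isUnit_iff_ne_zero, ← Matrix.isUnit_iff_isUnit_det,
    ← Matrix.linearIndependent_cols_iff_isUnit]
  rfl

theorem indep_iff_of_det_submatrix_ne_zero_iff {A B : Matrix (Fin r) (Fin n) F}
    {f₀ : Fin r → Fin n} (hf₀ : (A.submatrix id f₀).det ≠ 0)
    (hbases : ∀ f : Fin r → Fin n, (A.submatrix id f).det ≠ 0 ↔ (B.submatrix id f).det ≠ 0)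
    (S : Set (Fin n)) : Indep A S ↔ Indep B S := by
  simp only [← linearIndependent_transpose_comp_iff_det_ne_zero] at hf₀ hbases
  exact linearIndepOn_iff_of_linearIndependent_comp_iff (finrank_fin_fun F) hf₀ hbases S

end Matrix

def nonFano : Matrix (Fin 3) (Fin 7) (ZMod 5) :=
  !![1,0,0,1,0,1,1; 0,1,0,1,1,0,1; 0,0,1,0,1,1,1]

theorem det_submatrix_nonFano_ext_ne_zero_iff (f : Fin 3 → Fin 8) :
    ((appendCol nonFano ![1,1,3]).submatrix id f).det ≠ 0 ↔
      ((appendCol nonFano ![1,1,4]).submatrix id f).det ≠ 0 := by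
  simp only [Matrix.det_fin_three, Matrix.submatrix_apply, id]
  generalize f 0 = a, f 1 = b, f 2 = c
  revert a b c
  decide

-- `Q` swaps the points `e₁ ↔ e₂` and `e₃ ↔ (1,1,1)`, fixes `(1,1,0)`, `(0,1,1)`, `(1,0,1)` and
-- sends `(1,1,3)` to a multiple of `(1,1,4)`; `σ` undoes the two swaps.
theorem geomEquiv_nonFano_ext :
    GeomEquiv (appendCol nonFano ![1,1,3]) (appendCol nonFano ![1,1,4]) := by
  refine ⟨!![0,1,4; 1,0,4; 0,0,4], ![1,1,4,1,4,4,4,2], Equiv.swap 0 1 * Equiv.swap 2 6,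
    ?_, by decide, by decide⟩
  rw [Matrix.isUnit_iff_isUnit_det, isUnit_iff_ne_zero]
  decide

/-- The extensions of the non-Fano matrix `NF` by the columns `(1,1,3)ᵀ` and
`(1,1,4)ᵀ` are geometrically equivalent over `GF(5)` and equal as labeled matroids. -/
theorem nonFano_ext_113_114 :
    let NF : Matrix (Fin 3) (Fin 7) (ZMod 5) :=
      !![1,0,0,1,0,1,1; 0,1,0,1,1,0,1; 0,0,1,0,1,1,1]
    GeomEquiv (appendCol NF ![1,1,3]) (appendCol NF ![1,1,4]) ∧
      ∀ S : Set (Fin 8),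
        Indep (appendCol NF ![1,1,3]) S ↔ Indep (appendCol NF ![1,1,4]) S := by
  intro NF
  exact ⟨geomEquiv_nonFano_ext,
    indep_iff_of_det_submatrix_ne_zero_iff (f₀ := ![0, 1, 2]) (by decide)
      det_submatrix_nonFano_ext_ne_zero_iff⟩
end
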